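/- Let ζ be a non-bounding 1-cycle of K and η a connected 1-cocycle of K. The following are equivalent: (a) η is a feasible set for ζ, i.e., every cycle homologous to ζ contains an edge of η; (b) every cycle homologous to ζ intersects η in an odd number of edges; (c) there exists a cycle homologous to ζ that intersects η in an odd number of edges. -/

import Mathlib

namespace ArxivCut

noncomputable section

attribute [local instance] Classical.propDecidable

open Finset

variable {V : Type*} [Fintype V] [DecidableEq V]

/-- A finite abstract simplicial complex on the vertex type `V`. -/
structure SComplex (V : Type*) [DecidableEq V] where
  faces : Finset (Finset V)
  nonempty_mem : ∀ s ∈ faces, s.Nonempty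
  down_closed : ∀ s ∈ faces, ∀ t ⊆ s, t.Nonempty → t ∈ faces

/-- The boundary of a `𝔽₂`-chain (a chain is identified with its set of simplices):
a simplex `τ` lies in the boundary iff it is a facet of an odd number of members. -/
def bdry (c : Finset (Finset V)) : Finset (Finset V) :=
  Finset.univ.filter fun τ => Odd ((c.filter fun σ => τ ⊆ σ ∧ τ.card + 1 = σ.card)).card

/-- `c` is an `r`-chain of `K` (a set of `r`-simplices of `K`). -/
def IsRChain (K : SComplex V) (r : ℕ) (c : Finset (Finset V)) : Prop :=
  ∀ σ ∈ c, σ ∈ K.faces ∧ σ.card = r + 1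

/-- `c` is an `r`-cycle of `K`. -/
def IsRCycle (K : SComplex V) (r : ℕ) (c : Finset (Finset V)) : Prop :=
  IsRChain K r c ∧ bdry c = ∅

/-- `z` is a bounding `r`-cycle of `K`: it is the boundary of an `(r+1)`-chain of `K`. -/
def IsBounding (K : SComplex V) (r : ℕ) (z : Finset (Finset V)) : Prop :=
  ∃ b, IsRChain K (r + 1) b ∧ bdry b = z

/-- Two `r`-chains are homologous in `K` if their `𝔽₂`-sum (symmetric difference) bounds. -/
def Homologous (K : SComplex V) (r : ℕ) (a b : Finset (Finset V)) : Prop :=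
  IsBounding K r (symmDiff a b)


/-- `e` is an edge (1-simplex) of `K`. -/
def IsEdge (K : SComplex V) (e : Finset V) : Prop := e ∈ K.faces ∧ e.card = 2

/-- `t` is a triangle (2-simplex) of `K`. -/
def IsTri (K : SComplex V) (t : Finset V) : Prop := t ∈ K.faces ∧ t.card = 3

/-- The 1-skeleton of `K`, as a simple graph on the vertex type. -/
def skeleton (K : SComplex V) : SimpleGraph V where
  Adj u w := u ≠ w ∧ ({u, w} : Finset V) ∈ K.faces
  symm := by
    constructor
    intro u w h
    refine ⟨h.1.symm, ?_⟩
    rw [Finset.pair_comm]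
    exact h.2
  loopless := by constructor; intro v h; exact h.1 rfl

/-- `K` is a triangulation of a closed surface: a finite connected 2-dimensional
simplicial complex in which every edge is contained in exactly two triangles and the link
of every vertex is a single cycle (equivalently, the triangles around each vertex are
connected through edges containing that vertex). -/
structure IsClosedSurface (K : SComplex V) : Prop where
  vert_mem : ∀ v : V, ({v} : Finset V) ∈ K.faces
  dim_le : ∀ s ∈ K.faces, s.card ≤ 3
  pure2 : ∀ s ∈ K.faces, ∃ t, IsTri K t ∧ s ⊆ t
  edge_in_two_tri : ∀ e, IsEdge K e →
    (Finset.univ.filter fun t => IsTri K t ∧ e ⊆ t).card = 2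
  conn : (skeleton K).Connected
  link_single_cycle : ∀ v : V, ∀ t₁ t₂, IsTri K t₁ → IsTri K t₂ → v ∈ t₁ → v ∈ t₂ →
    Relation.ReflTransGen
      (fun a b => IsTri K a ∧ IsTri K b ∧ v ∈ a ∧ v ∈ b ∧ (a ∩ b).card = 2) t₁ t₂

/-- `c` is a 1-cycle of `K`: a set of edges of `K` meeting every vertex in an even number
of edges. -/
def IsOneCycle (K : SComplex V) (c : Finset (Finset V)) : Prop :=
  (∀ e ∈ c, IsEdge K e) ∧ ∀ v : V, Even ((c.filter fun e => v ∈ e).card)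

/-- `z` is a sum of boundaries of triangles of `K`. -/
def IsBounding1 (K : SComplex V) (z : Finset (Finset V)) : Prop :=
  ∃ T : Finset (Finset V), (∀ t ∈ T, IsTri K t) ∧ bdry T = z

/-- Two 1-chains are homologous: their sum (symmetric difference) is a sum of triangle
boundaries. -/
def Homol1 (K : SComplex V) (a b : Finset (Finset V)) : Prop :=
  IsBounding1 K (symmDiff a b)

/-- `η` is a 1-cocycle of `K`: a set of edges of `K` such that every triangle of `K`
contains an even number of edges of `η`. -/
def IsCocycle (K : SComplex V) (η : Finset (Finset V)) : Prop :=
  (∀ e ∈ η, IsEdge K e) ∧ ∀ t, IsTri K t → Even ((η.filter fun e => e ⊆ t).card)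

/-- The dual edges corresponding to the edge set `F` : two distinct triangles of `K` are
related if they share an edge belonging to `F`. -/
def DualStep (K : SComplex V) (F : Finset (Finset V)) (t₁ t₂ : Finset V) : Prop :=
  t₁ ≠ t₂ ∧ IsTri K t₁ ∧ IsTri K t₂ ∧ ∃ e ∈ F, e ⊆ t₁ ∧ e ⊆ t₂

/-- A triangle incident to the edge set `F` (a node of the subgraph of the dual graph
induced by the dual edges corresponding to `F`). -/
def Incident (K : SComplex V) (F : Finset (Finset V)) (t : Finset V) : Prop :=
  IsTri K t ∧ ∃ e ∈ F, e ⊆ t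

/-- The subgraph of the dual graph `D_K` induced by the dual edges corresponding to the
edge set `F` is connected. -/
def DualConnected (K : SComplex V) (F : Finset (Finset V)) : Prop :=
  ∀ t₁ t₂, Incident K F t₁ → Incident K F t₂ →
    Relation.ReflTransGen (DualStep K F) t₁ t₂

/-- `S` is a feasible set for the 1-cycle `ζ`: it intersects every cycle homologous
to `ζ`. -/
def Feasible (K : SComplex V) (ζ S : Finset (Finset V)) : Prop :=
  ∀ γ, IsOneCycle K γ → Homol1 K γ ζ → (γ ∩ S).Nonempty

/-- The coboundary `δ(A)` of a set `A` of vertices: the set of edges of `K` with exactly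
one endpoint in `A`. -/
def cobdryV (K : SComplex V) (A : Finset V) : Finset (Finset V) :=
  Finset.univ.filter fun e => IsEdge K e ∧ (e ∩ A).card = 1

/-- Two cocycles are cohomologous: their sum (symmetric difference) is a coboundary. -/
def Cohomologous (K : SComplex V) (η η' : Finset (Finset V)) : Prop :=
  ∃ A : Finset V, symmDiff η η' = cobdryV K A

/-!
Two `η`-edges of one triangle `t` are exactly the `η`-edges of `∂t`, because a cocycle meets
each triangle in an even number (at most three) of edges. Walking along a dual path inside
`η` and adding up these triangles, every pair `{e, e'} ⊆ η`, and hence every even subset of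
`η`, is the trace on `η` of a sum of triangle boundaries. Adding such a boundary to a cycle
`γ` for which `|γ ∩ η|` is even yields a homologous cycle disjoint from `η`, so a feasible
`η` meets every cycle of the class oddly. Conversely the cocycle condition makes
`|∂T ∩ η|` even for every 2-chain `T`, so the parity of `|γ ∩ η|` is a homology invariant.
-/

open scoped symmDiff

section FinsetSymmDiff

variable {α : Type*} [DecidableEq α]

theorem card_symmDiff_add_two_mul_card_inter (s t : Finset α) :
    #(s ∆ t) + 2 * #(s ∩ t) = #s + #t := by
  have hunion := card_union_add_card_inter s t
  have hle := card_le_card (inter_subset_union (s := s) (t := t))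
  rw [symmDiff_eq_sup_sdiff_inf, sup_eq_union, inf_eq_inter,
    card_sdiff_of_subset inter_subset_union]
  omega

theorem even_card_symmDiff_iff (s t : Finset α) :
    Even #(s ∆ t) ↔ (Even #s ↔ Even #t) := by
  rw [← Nat.even_add, ← card_symmDiff_add_two_mul_card_inter, Nat.even_add]
  simp

theorem filter_symmDiff (p : α → Prop) [DecidablePred p] (s t : Finset α) :
    (s ∆ t).filter p = s.filter p ∆ t.filter p := by
  ext x
  simp only [mem_filter, mem_symmDiff]
  tauto

theorem inter_symmDiff_distrib_right (s t u : Finset α) :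
    s ∆ t ∩ u = (s ∩ u) ∆ (t ∩ u) :=
  _root_.inf_symmDiff_distrib_right s t u

end FinsetSymmDiff

section Chains

-- `V` is redeclared without the `Fintype` instance, which these statements do not need.
variable {V : Type*} [DecidableEq V] {K : SComplex V}

def IsTriChain (K : SComplex V) (T : Finset (Finset V)) : Prop := ∀ t ∈ T, IsTri K t

theorem isTriChain_empty : IsTriChain K ∅ := by
  simp [IsTriChain]

theorem isTriChain_singleton {t : Finset V} (ht : IsTri K t) : IsTriChain K {t} := by
  simpa [IsTriChain] using ht

theorem IsTriChain.symmDiff {T₁ T₂ : Finset (Finset V)} (h₁ : IsTriChain K T₁)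
    (h₂ : IsTriChain K T₂) : IsTriChain K (T₁ ∆ T₂) := fun t ht =>
  (mem_symmDiff.1 ht).elim (fun h => h₁ t h.1) (fun h => h₂ t h.1)

theorem IsOneCycle.symmDiff {a b : Finset (Finset V)} (ha : IsOneCycle K a)
    (hb : IsOneCycle K b) : IsOneCycle K (a ∆ b) := by
  refine ⟨fun e he => (mem_symmDiff.1 he).elim (fun h => ha.1 e h.1) (fun h => hb.1 e h.1),
    fun v => ?_⟩
  rw [filter_symmDiff, even_card_symmDiff_iff]
  exact iff_of_true (ha.2 v) (hb.2 v)

end Chains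

theorem mem_bdry {c : Finset (Finset V)} {τ : Finset V} :
    τ ∈ bdry c ↔ Odd #(c.filter fun σ => τ ⊆ σ ∧ τ.card + 1 = σ.card) := by
  simp [bdry]

@[simp]
theorem bdry_empty : bdry (∅ : Finset (Finset V)) = ∅ := by
  ext τ
  simp [mem_bdry]

theorem bdry_symmDiff (A B : Finset (Finset V)) : bdry (A ∆ B) = bdry A ∆ bdry B := by
  ext τ
  rw [mem_symmDiff, mem_bdry, mem_bdry, mem_bdry, filter_symmDiff, ← Nat.not_even_iff_odd,
    ← Nat.not_even_iff_odd, ← Nat.not_even_iff_odd, even_card_symmDiff_iff]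
  tauto

theorem mem_bdry_singleton {σ τ : Finset V} : τ ∈ bdry {σ} ↔ τ ⊆ σ ∧ τ.card + 1 = σ.card := by
  rw [mem_bdry, filter_singleton]
  split_ifs with h <;> simp [h]

theorem bdry_singleton_of_card_eq_three {t : Finset V} (ht : #t = 3) :
    bdry {t} = t.powersetCard 2 := by
  ext e
  rw [mem_bdry_singleton, mem_powersetCard, ht]
  exact and_congr_right fun _ => by omega

theorem card_bdry_singleton_of_card_eq_three {t : Finset V} (ht : #t = 3) : #(bdry {t}) = 3 := by
  rw [bdry_singleton_of_card_eq_three ht, card_powersetCard, ht]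
  rfl

section TriangleChains

variable {K : SComplex V}

theorem IsTriChain.induction_bdry {P : Finset (Finset V) → Prop} {T : Finset (Finset V)}
    (hT : IsTriChain K T) (empty : P ∅) (symmDiff : ∀ a b, P a → P b → P (a ∆ b))
    (tri : ∀ t, IsTri K t → P (bdry {t})) : P (bdry T) := by
  induction T using Finset.induction_on with
  | empty => simpa using empty
  | insert t T htT ih =>
    rw [insert_eq, ← symmDiff_eq_union (disjoint_singleton_left.2 htT), bdry_symmDiff]
    exact symmDiff _ _ (tri t (hT t (mem_insert_self t T)))
      (ih fun s hs => hT s (mem_insert_of_mem hs))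

theorem Homol1.refl (γ : Finset (Finset V)) : Homol1 K γ γ :=
  ⟨∅, isTriChain_empty, by simp⟩

theorem Homol1.symm {a b : Finset (Finset V)} (h : Homol1 K a b) : Homol1 K b a := by
  rwa [Homol1, symmDiff_comm]

theorem Homol1.trans {a b c : Finset (Finset V)} (hab : Homol1 K a b) (hbc : Homol1 K b c) :
    Homol1 K a c := by
  obtain ⟨T₁, hT₁, h₁⟩ := hab
  obtain ⟨T₂, hT₂, h₂⟩ := hbc
  exact ⟨T₁ ∆ T₂, IsTriChain.symmDiff hT₁ hT₂, by
    rw [bdry_symmDiff, h₁, h₂, symmDiff_assoc, symmDiff_symmDiff_cancel_left]⟩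

theorem homol1_symmDiff_bdry (γ : Finset (Finset V)) {T : Finset (Finset V)}
    (hT : IsTriChain K T) : Homol1 K (γ ∆ bdry T) γ :=
  ⟨T, hT, (symmDiff_symmDiff_self' γ (bdry T)).symm⟩

end TriangleChains

section OneCycles

variable {K : SComplex V}

theorem isOneCycle_bdry_singleton {t : Finset V} (ht : IsTri K t) : IsOneCycle K (bdry {t}) := by
  rw [bdry_singleton_of_card_eq_three ht.2]
  refine ⟨fun e he => ?_, fun v => ?_⟩
  · obtain ⟨het, he2⟩ := mem_powersetCard.1 he
    exact ⟨K.down_closed t ht.1 e het (card_pos.1 (by omega)), he2⟩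
  by_cases hv : v ∈ t
  · have hcount := card_filter_powersetCard_subset {v} t 2 (singleton_subset_iff.2 hv) (by simp)
    simp only [singleton_subset_iff, ht.2, card_singleton] at hcount
    rw [hcount]
    decide
  · rw [filter_false_of_mem fun e he hve => hv ((mem_powersetCard.1 he).1 hve), card_empty]
    exact Even.zero

theorem isOneCycle_bdry {T : Finset (Finset V)} (hT : IsTriChain K T) :
    IsOneCycle K (bdry T) :=
  hT.induction_bdry ⟨by simp, by simp⟩ (fun _ _ ha hb => ha.symmDiff hb)
    (fun _ => isOneCycle_bdry_singleton)

end OneCycles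

section Cocycles

variable {K : SComplex V} {η : Finset (Finset V)}

theorem IsCocycle.even_card_bdry_singleton_inter (hη : IsCocycle K η) {t : Finset V}
    (ht : IsTri K t) : Even #(bdry {t} ∩ η) := by
  convert hη.2 t ht using 2
  ext e
  rw [mem_inter, mem_bdry_singleton, mem_filter, ht.2]
  exact ⟨fun ⟨⟨het, _⟩, heη⟩ => ⟨heη, het⟩,
    fun ⟨heη, het⟩ => ⟨⟨het, by rw [(hη.1 e heη).2]⟩, heη⟩⟩

theorem IsCocycle.even_card_bdry_inter (hη : IsCocycle K η) {T : Finset (Finset V)}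
    (hT : IsTriChain K T) : Even #(bdry T ∩ η) :=
  hT.induction_bdry (P := fun S => Even #(S ∩ η)) (by simp)
    (fun a b ha hb => by
      rw [inter_symmDiff_distrib_right, even_card_symmDiff_iff]
      exact iff_of_true ha hb)
    (fun _ => hη.even_card_bdry_singleton_inter)

theorem Homol1.even_card_inter_iff (hη : IsCocycle K η) {a b : Finset (Finset V)}
    (h : Homol1 K a b) : Even #(a ∩ η) ↔ Even #(b ∩ η) := by
  obtain ⟨T, hT, hab⟩ := h
  rw [← even_card_symmDiff_iff, ← inter_symmDiff_distrib_right, ← hab]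
  exact hη.even_card_bdry_inter hT

def IsBdryTrace (K : SComplex V) (η S : Finset (Finset V)) : Prop :=
  ∃ T, IsTriChain K T ∧ bdry T ∩ η = S

theorem isBdryTrace_empty : IsBdryTrace K η ∅ :=
  ⟨∅, isTriChain_empty, by simp⟩

theorem IsBdryTrace.symmDiff {S₁ S₂ : Finset (Finset V)} (h₁ : IsBdryTrace K η S₁)
    (h₂ : IsBdryTrace K η S₂) : IsBdryTrace K η (S₁ ∆ S₂) := by
  obtain ⟨T₁, hT₁, rfl⟩ := h₁
  obtain ⟨T₂, hT₂, rfl⟩ := h₂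
  exact ⟨T₁ ∆ T₂, hT₁.symmDiff hT₂, by rw [bdry_symmDiff, inter_symmDiff_distrib_right]⟩

theorem IsCocycle.isBdryTrace_pair_of_subset (hη : IsCocycle K η) {t e e' : Finset V}
    (ht : IsTri K t) (he : e ∈ η) (he' : e' ∈ η) (het : e ⊆ t) (he't : e' ⊆ t) :
    IsBdryTrace K η ({e} ∆ {e'}) := by
  by_cases hee' : e = e'
  · simpa [hee'] using isBdryTrace_empty
  refine ⟨{t}, isTriChain_singleton ht, ?_⟩
  have hpair : {e} ∆ {e'} ⊆ bdry {t} ∩ η := by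
    rw [symmDiff_eq_union (disjoint_singleton.2 hee')]
    refine union_subset ?_ ?_ <;> rw [singleton_subset_iff, mem_inter, mem_bdry_singleton, ht.2]
    · exact ⟨⟨het, by rw [(hη.1 e he).2]⟩, he⟩
    · exact ⟨⟨he't, by rw [(hη.1 e' he').2]⟩, he'⟩
  have hcard_pair : #({e} ∆ {e'}) = 2 := by
    rw [symmDiff_eq_union (disjoint_singleton.2 hee'), ← insert_eq, card_pair hee']
  have hle : #(bdry {t} ∩ η) ≤ 3 :=
    (card_le_card inter_subset_left).trans (card_bdry_singleton_of_card_eq_three ht.2).le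
  have heven := Nat.even_iff.1 (hη.even_card_bdry_singleton_inter ht)
  exact (eq_of_subset_of_card_le hpair (by omega)).symm

theorem IsCocycle.isBdryTrace_pair_of_reflTransGen (hη : IsCocycle K η) {t t' e e' : Finset V}
    (hpath : Relation.ReflTransGen (DualStep K η) t t') (ht : IsTri K t) (he : e ∈ η)
    (het : e ⊆ t) (he' : e' ∈ η) (he't' : e' ⊆ t') : IsBdryTrace K η ({e} ∆ {e'}) := by
  induction hpath generalizing e' with
  | refl => exact hη.isBdryTrace_pair_of_subset ht he he' het he't'
  | tail _ hstep ih =>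
    obtain ⟨-, -, hc, g, hg, hgb, hgc⟩ := hstep
    have := (ih hg hgb).symmDiff (hη.isBdryTrace_pair_of_subset hc hg he' hgc he't')
    rwa [symmDiff_assoc, symmDiff_symmDiff_cancel_left] at this

theorem isBdryTrace_pair (hK : IsClosedSurface K) (hη : IsCocycle K η)
    (hconn : DualConnected K η) {e e' : Finset V} (he : e ∈ η) (he' : e' ∈ η) :
    IsBdryTrace K η ({e} ∆ {e'}) := by
  obtain ⟨t, ht, het⟩ := hK.pure2 e (hη.1 e he).1
  obtain ⟨t', ht', he't'⟩ := hK.pure2 e' (hη.1 e' he').1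
  exact hη.isBdryTrace_pair_of_reflTransGen (hconn t t' ⟨ht, e, he, het⟩ ⟨ht', e', he', he't'⟩)
    ht he het he' he't'

theorem isBdryTrace_or_symmDiff_singleton (hK : IsClosedSurface K) (hη : IsCocycle K η)
    (hconn : DualConnected K η) {e₀ : Finset V} (he₀ : e₀ ∈ η) {S : Finset (Finset V)}
    (hS : S ⊆ η) : IsBdryTrace K η S ∨ IsBdryTrace K η (S ∆ {e₀}) := by
  induction S using Finset.induction_on with
  | empty => exact Or.inl isBdryTrace_empty
  | insert e S heS ih =>
    have hpair := isBdryTrace_pair hK hη hconn he₀ (hS (mem_insert_self e S))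
    rw [insert_eq, union_comm, ← symmDiff_eq_union (disjoint_singleton_right.2 heS)]
    rcases ih ((subset_insert e S).trans hS) with h | h
    · right
      rw [symmDiff_right_comm, symmDiff_assoc]
      exact h.symmDiff hpair
    · left
      have := h.symmDiff hpair
      rwa [symmDiff_assoc, symmDiff_symmDiff_cancel_left] at this

theorem isBdryTrace_of_even_card (hK : IsClosedSurface K) (hη : IsCocycle K η)
    (hconn : DualConnected K η) {S : Finset (Finset V)} (hS : S ⊆ η) (heven : Even #S) :
    IsBdryTrace K η S := by
  rcases S.eq_empty_or_nonempty with rfl | ⟨e₀, he₀⟩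
  · exact isBdryTrace_empty
  refine (isBdryTrace_or_symmDiff_singleton hK hη hconn (hS he₀) hS).resolve_right ?_
  rintro ⟨T, hT, hTS⟩
  have hparity := hη.even_card_bdry_inter hT
  rw [hTS, even_card_symmDiff_iff, card_singleton] at hparity
  exact Nat.not_even_one (hparity.1 heven)

theorem exists_homol1_inter_eq_empty (hK : IsClosedSurface K) (hη : IsCocycle K η)
    (hconn : DualConnected K η) {γ : Finset (Finset V)} (hγ : IsOneCycle K γ)
    (heven : Even #(γ ∩ η)) : ∃ γ', IsOneCycle K γ' ∧ Homol1 K γ' γ ∧ γ' ∩ η = ∅ := by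
  obtain ⟨T, hT, hTγ⟩ := isBdryTrace_of_even_card hK hη hconn inter_subset_right heven
  refine ⟨γ ∆ bdry T, hγ.symmDiff (isOneCycle_bdry hT), homol1_symmDiff_bdry γ hT, ?_⟩
  rw [inter_symmDiff_distrib_right, hTγ, symmDiff_self, bot_eq_empty]

end Cocycles

theorem statement4_general (K : SComplex V) (hK : IsClosedSurface K)
    (ζ : Finset (Finset V)) (hζ : IsOneCycle K ζ)
    (η : Finset (Finset V)) (hη : IsCocycle K η) (hconn : DualConnected K η) :
    (Feasible K ζ η ↔ ∀ γ, IsOneCycle K γ → Homol1 K γ ζ → Odd ((γ ∩ η).card)) ∧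
    (Feasible K ζ η ↔ ∃ γ, IsOneCycle K γ ∧ Homol1 K γ ζ ∧ Odd ((γ ∩ η).card)) := by
  have feasible_iff_odd :
      Feasible K ζ η ↔ ∀ γ, IsOneCycle K γ → Homol1 K γ ζ → Odd ((γ ∩ η).card) := by
    refine ⟨fun hfeas γ hγ hγζ => ?_, fun hodd γ hγ hγζ => card_pos.1 (hodd γ hγ hγζ).pos⟩
    by_contra heven
    obtain ⟨γ', hγ', hγ'γ, hdisj⟩ :=
      exists_homol1_inter_eq_empty hK hη hconn hγ (Nat.not_odd_iff_even.1 heven)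
    simpa [hdisj] using hfeas γ' hγ' (hγ'γ.trans hγζ)
  refine ⟨feasible_iff_odd, feasible_iff_odd.trans
    ⟨fun hodd => ⟨ζ, hζ, .refl ζ, hodd ζ hζ (.refl ζ)⟩, ?_⟩⟩
  rintro ⟨γ₀, -, hγ₀ζ, hodd₀⟩ γ - hγζ
  rw [← Nat.not_even_iff_odd] at hodd₀ ⊢
  rwa [(hγζ.trans hγ₀ζ.symm).even_card_inter_iff hη]

/-- Let `ζ` be a non-bounding 1-cycle of `K` and `η` a connected
1-cocycle of `K`.  The following are equivalent: (a) `η` is a feasible set for `ζ`;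
(b) every cycle homologous to `ζ` intersects `η` in an odd number of edges; (c) some
cycle homologous to `ζ` intersects `η` in an odd number of edges. -/
theorem statement4 (K : SComplex V) (hK : IsClosedSurface K)
    (ζ : Finset (Finset V)) (hζ : IsOneCycle K ζ) (hnb : ¬ IsBounding1 K ζ)
    (η : Finset (Finset V)) (hη : IsCocycle K η) (hconn : DualConnected K η) :
    (Feasible K ζ η ↔ ∀ γ, IsOneCycle K γ → Homol1 K γ ζ → Odd ((γ ∩ η).card)) ∧
    (Feasible K ζ η ↔ ∃ γ, IsOneCycle K γ ∧ Homol1 K γ ζ ∧ Odd ((γ ∩ η).card)) :=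
  statement4_general K hK ζ hζ η hη hconn

end

end ArxivCut
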